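/- Equality of symmetric-weight and stochastic-weight Gibbs measures: let t>γ'>0 and set a=sinh(t+γ'), b=sinh(t−γ'), c=sinh(2γ') (so that Δ=(a²+b²−c²)/(2ab)>1 and a>b), q=e^{4γ'}, and w=(e^{2t−2γ'}−1)/(e^{2t+2γ'}−1) (then 0<w<1 and 0<q·w<1). Then for every n≥1, the Gibbs measure on DWBC configurations of the n×n square with weights (a,b,c) coincides with the probability measure that assigns to each DWBC configuration σ a probability proportional to w^{N₃(σ)}·(q·w)^{N₄(σ)}·(1−w)^{N₅(σ)}·(1−q·w)^{N₆(σ)} (i.e. the Gibbs measure for the stochastic weights 1,1,w,qw,1−w,1−qw assigned to Types 1–6 respectively). -/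

import Mathlib

/-! The ice rule makes the occupations a divergence-free flow, and with the domain wall boundary
this pins down three linear relations among the vertex counts: `N₅ = N₆ + n` (each row carries a
net flux of one from left to right), `N₃ = N₄` (by summation by parts both the horizontal and the
vertical occupations total `n (n + 1) / 2`), and `N₁ + ⋯ + N₆ = n²`. Hence both weights depend
only on `N₁ + N₂`, `N₃` and `N₆`. The parametrisation gives `w · q w = (b / a)²` and
`(1 - w)(1 - q w) = (c / a)²`, so the stochastic weight of every configuration is the symmetric
one times a factor depending on `n` alone, which normalisation cancels. -/

open scoped BigOperators
open Filter MeasureTheory Topology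

namespace SixV

/-- Edge occupations for the six-vertex model on the `n × n` square:
`σ.1 x j` is the occupation of the horizontal edge between `(x, j+1)` and `(x+1, j+1)`
(i.e. `H(x, j+1)` for `x ∈ {0,…,n}`), and `σ.2 i y` is the occupation of the vertical
edge `V(i+1, y)` for `y ∈ {0,…,n}`. -/
abbrev Config (n : ℕ) := (Fin (n + 1) → Fin n → Bool) × (Fin n → Fin (n + 1) → Bool)

def b2n (b : Bool) : ℕ := if b then 1 else 0

/-- Domain Wall Boundary Conditions together with the ice rule (conservation law). -/
def IsDWBC {n : ℕ} (σ : Config n) : Prop :=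
  (∀ i j : Fin n,
      b2n (σ.1 i.castSucc j) + b2n (σ.2 i j.castSucc)
        = b2n (σ.1 i.succ j) + b2n (σ.2 i j.succ)) ∧
  (∀ j : Fin n, σ.1 0 j = true) ∧
  (∀ j : Fin n, σ.1 (Fin.last n) j = false) ∧
  (∀ i : Fin n, σ.2 i 0 = false) ∧
  (∀ i : Fin n, σ.2 i (Fin.last n) = true)

abbrev DWBC (n : ℕ) := {σ : Config n // IsDWBC σ}

noncomputable instance instFintypeDWBC (n : ℕ) : Fintype (DWBC n) := Fintype.ofFinite _

/-- Vertex type from quadruple (H(x−1,y), V(x,y−1), H(x,y), V(x,y)). -/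
def vtype : Bool → Bool → Bool → Bool → ℕ
  | false, false, false, false => 1
  | true,  true,  true,  true  => 2
  | true,  false, true,  false => 3
  | false, true,  false, true  => 4
  | true,  false, false, true  => 5
  | false, true,  true,  false => 6
  | _, _, _, _ => 0

/-- Type of the vertex at `(i+1, j+1)`. -/
def vertexType {n : ℕ} (σ : Config n) (i j : Fin n) : ℕ :=
  vtype (σ.1 i.castSucc j) (σ.2 i j.castSucc) (σ.1 i.succ j) (σ.2 i j.succ)

/-- `Ncount σ t` is the number of vertices of Type `t`. -/
noncomputable def Ncount {n : ℕ} (σ : Config n) (ty : ℕ) : ℕ :=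
  (Finset.univ.filter fun p : Fin n × Fin n => vertexType σ p.1 p.2 = ty).card

/-- The weight `a^(N₁+N₂) b^(N₃+N₄) c^(N₅+N₆)`. -/
noncomputable def wtABC {n : ℕ} (a b c : ℝ) (σ : Config n) : ℝ :=
  a ^ (Ncount σ 1 + Ncount σ 2) * b ^ (Ncount σ 3 + Ncount σ 4)
    * c ^ (Ncount σ 5 + Ncount σ 6)

/-- Gibbs probability of a DWBC configuration. -/
noncomputable def gibbs (n : ℕ) (a b c : ℝ) (σ : DWBC n) : ℝ :=
  wtABC a b c σ.1 / ∑ σ' : DWBC n, wtABC a b c σ'.1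

/-- Columns `x ∈ {1,…,n}` with `V(x, j) = 1`. -/
noncomputable def rowFinset {n : ℕ} (σ : DWBC n) (j : ℕ) : Finset ℕ :=
  if h : j ≤ n then
    (Finset.univ.filter fun x : Fin n => σ.1.2 x ⟨j, Nat.lt_succ_of_le h⟩ = true).image
      fun x : Fin n => (x : ℕ) + 1
  else ∅

/-- The monotone triangle: `lam σ i j` is the `i`-th smallest column with `V(·, j) = 1`. -/
noncomputable def lam {n : ℕ} (σ : DWBC n) (i j : ℕ) : ℕ :=
  ((rowFinset σ j).sort (· ≤ ·)).getD (i - 1) 0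

/-- The stochastic weight of a configuration: Types 1 and 2 have weight `1`,
Type 3 ↦ `w`, Type 4 ↦ `q·w`, Type 5 ↦ `1−w`, Type 6 ↦ `1−q·w`. -/
noncomputable def wtSt {n : ℕ} (q w : ℝ) (σ : Config n) : ℝ :=
  w ^ Ncount σ 3 * (q * w) ^ Ncount σ 4 * (1 - w) ^ Ncount σ 5 * (1 - q * w) ^ Ncount σ 6

/-- The Gibbs measure with stochastic weights `1, 1, w, q·w, 1−w, 1−q·w`. -/
noncomputable def gibbsSt (n : ℕ) (q w : ℝ) (σ : DWBC n) : ℝ :=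
  wtSt q w σ.1 / ∑ σ' : DWBC n, wtSt q w σ'.1

theorem Fin.sum_castSucc_sub_succ {G : Type*} [AddCommGroup G] {n : ℕ} (u : Fin (n + 1) → G) :
    ∑ i : Fin n, (u i.castSucc - u i.succ) = u 0 - u (Fin.last n) := by
  induction n with
  | zero => simp
  | succ n ih =>
    rw [Fin.sum_univ_castSucc]
    simp only [Fin.succ_castSucc]
    rw [ih (fun i => u i.castSucc)]
    simp

theorem Fin.sum_succ_sub_castSucc {G : Type*} [AddCommGroup G] {n : ℕ} (u : Fin (n + 1) → G) :
    ∑ i : Fin n, (u i.succ - u i.castSucc) = u (Fin.last n) - u 0 := by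
  rw [← neg_sub, ← Fin.sum_castSucc_sub_succ, ← Finset.sum_neg_distrib]
  simp only [neg_sub]

theorem Fin.sum_val_mul_castSucc_sub_succ {R : Type*} [CommRing R] {n : ℕ} (u : Fin (n + 1) → R) :
    ∑ i : Fin n, (i : R) * (u i.castSucc - u i.succ)
      = ∑ i : Fin n, u i.succ - n * u (Fin.last n) := by
  induction n with
  | zero => simp
  | succ n ih =>
    rw [Fin.sum_univ_castSucc, Fin.sum_univ_castSucc (f := fun i => u i.succ)]
    simp only [Fin.succ_castSucc, Fin.val_castSucc]
    rw [ih (fun i => u i.castSucc)]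
    simp only [Fin.val_last, Fin.succ_last]
    push_cast
    ring

theorem Fin.two_mul_sum_val (n : ℕ) : 2 * ∑ i : Fin n, (i : ℤ) = n * (n - 1) := by
  induction n with
  | zero => simp
  | succ n ih =>
    rw [Fin.sum_univ_castSucc, mul_add]
    simp only [Fin.val_castSucc, Fin.val_last, ih]
    push_cast
    ring

section Conservation

variable {R : Type*} [CommRing R] {n : ℕ} {h : Fin (n + 1) → Fin n → R}
  {v : Fin n → Fin (n + 1) → R}

theorem sum_horizontal_of_conservation
    (hcons : ∀ i j, h i.castSucc j - h i.succ j = v i j.succ - v i j.castSucc) :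
    ∑ i : Fin n, ∑ j, h i.succ j
      = ∑ i : Fin n, (i : R) * (v i (Fin.last n) - v i 0) + n * ∑ j, h (Fin.last n) j := by
  have hrow : ∀ j, ∑ i : Fin n, h i.succ j
      = ∑ i : Fin n, (i : R) * (v i j.succ - v i j.castSucc) + n * h (Fin.last n) j := by
    intro j
    simp only [← hcons, Fin.sum_val_mul_castSucc_sub_succ (fun x => h x j)]
    ring
  rw [Finset.sum_comm, Finset.sum_congr rfl fun j _ => hrow j, Finset.sum_add_distrib,
    Finset.sum_comm]
  simp only [← Finset.mul_sum, Fin.sum_succ_sub_castSucc]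

theorem sum_vertical_of_conservation
    (hcons : ∀ i j, h i.castSucc j - h i.succ j = v i j.succ - v i j.castSucc) :
    ∑ i, ∑ j : Fin n, v i j.succ
      = n * ∑ i, v i (Fin.last n) - ∑ j : Fin n, (j : R) * (h 0 j - h (Fin.last n) j) := by
  have htranspose := sum_horizontal_of_conservation (h := fun j i => v i j)
    (v := fun j i => h i j) fun j i => by linear_combination hcons i j
  rw [Finset.sum_comm, htranspose, ← sub_eq_zero]
  simp only [← neg_sub (h 0 _), mul_neg, Finset.sum_neg_distrib]
  ring

end Conservation

section VertexCounts

theorem vtype_mem_Icc {A B C D : Bool} (h : b2n A + b2n B = b2n C + b2n D) :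
    vtype A B C D ∈ Finset.Icc 1 6 := by
  revert A B C D; decide

theorem indicator_vtype_five_sub_six {A B C D : Bool} (h : b2n A + b2n B = b2n C + b2n D) :
    (if vtype A B C D = 5 then (1 : ℤ) else 0) - (if vtype A B C D = 6 then 1 else 0)
      = b2n A - b2n C := by
  revert A B C D; decide

theorem indicator_vtype_three_sub_four {A B C D : Bool} (h : b2n A + b2n B = b2n C + b2n D) :
    (if vtype A B C D = 3 then (1 : ℤ) else 0) - (if vtype A B C D = 4 then 1 else 0)
      = b2n C - b2n B := by
  revert A B C D; decide

variable {n : ℕ} {σ : Config n}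

theorem natCast_Ncount_sub_eq_sum {s t : ℕ} {f : Fin n → Fin n → ℤ}
    (hf : ∀ i j,
      (if vertexType σ i j = s then (1 : ℤ) else 0) - (if vertexType σ i j = t then 1 else 0)
        = f i j) :
    (Ncount σ s : ℤ) - Ncount σ t = ∑ i, ∑ j, f i j := by
  simp only [Ncount, Finset.card_filter, ← Fintype.sum_prod_type', ← hf, Nat.cast_sum,
    Nat.cast_ite, Nat.cast_one, Nat.cast_zero, Finset.sum_sub_distrib]

theorem Ncount_five_eq (hσ : IsDWBC σ) : Ncount σ 5 = Ncount σ 6 + n := by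
  obtain ⟨hice, hleft, hright, -, -⟩ := hσ
  suffices (Ncount σ 5 : ℤ) - Ncount σ 6 = n by omega
  calc (Ncount σ 5 : ℤ) - Ncount σ 6
      = ∑ i : Fin n, ∑ j, ((b2n (σ.1 i.castSucc j) : ℤ) - b2n (σ.1 i.succ j)) := by
        rw [natCast_Ncount_sub_eq_sum fun i j => indicator_vtype_five_sub_six (hice i j)]
    _ = n := by
        rw [Finset.sum_comm]
        simp only [fun j => Fin.sum_castSucc_sub_succ fun x => (b2n (σ.1 x j) : ℤ)]
        simp [hleft, hright, b2n]

theorem Ncount_three_eq_four (hσ : IsDWBC σ) : Ncount σ 3 = Ncount σ 4 := by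
  obtain ⟨hice, hleft, hright, hbot, htop⟩ := hσ
  have hcons : ∀ i j, ((b2n (σ.1 i.castSucc j) : ℤ) - b2n (σ.1 i.succ j))
      = b2n (σ.2 i j.succ) - b2n (σ.2 i j.castSucc) := fun i j => by
    have := hice i j; omega
  have hH : ∑ i : Fin n, ∑ j : Fin n, (b2n (σ.1 i.succ j) : ℤ) = ∑ i : Fin n, (i : ℤ) := by
    simpa [hright, hbot, htop, b2n] using sum_horizontal_of_conservation
      (h := fun x j => (b2n (σ.1 x j) : ℤ)) (v := fun i y => (b2n (σ.2 i y) : ℤ)) hcons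
  have hV : ∑ i : Fin n, ∑ j : Fin n, (b2n (σ.2 i j.succ) : ℤ) = n * n - ∑ j : Fin n, (j : ℤ) := by
    simpa [hleft, hright, htop, b2n] using sum_vertical_of_conservation
      (h := fun x j => (b2n (σ.1 x j) : ℤ)) (v := fun i y => (b2n (σ.2 i y) : ℤ)) hcons
  have hcol : ∑ i : Fin n, ∑ j : Fin n,
      ((b2n (σ.2 i j.succ) : ℤ) - b2n (σ.2 i j.castSucc)) = n := by
    simp only [fun i => Fin.sum_succ_sub_castSucc fun y => (b2n (σ.2 i y) : ℤ)]
    simp [hbot, htop, b2n]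
  suffices (Ncount σ 3 : ℤ) - Ncount σ 4 = 0 by omega
  calc (Ncount σ 3 : ℤ) - Ncount σ 4
      = ∑ i : Fin n, ∑ j : Fin n, ((b2n (σ.1 i.succ j) : ℤ) - b2n (σ.2 i j.castSucc)) := by
        rw [natCast_Ncount_sub_eq_sum fun i j => indicator_vtype_three_sub_four (hice i j)]
    _ = 0 := by
        simp only [Finset.sum_sub_distrib] at hcol ⊢
        linear_combination hH - hV + hcol + Fin.two_mul_sum_val n

theorem sum_Ncount_eq (hσ : IsDWBC σ) :
    Ncount σ 1 + Ncount σ 2 + Ncount σ 3 + Ncount σ 4 + Ncount σ 5 + Ncount σ 6 = n * n := by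
  have hcard := Finset.card_eq_sum_card_fiberwise (s := Finset.univ) (t := Finset.Icc 1 6)
    (f := fun p : Fin n × Fin n => vertexType σ p.1 p.2) fun p _ => vtype_mem_Icc (hσ.1 p.1 p.2)
  rw [Finset.card_univ, Fintype.card_prod, Fintype.card_fin] at hcard
  rw [hcard]
  simp [Finset.sum_Icc_succ_top, Ncount]

end VertexCounts

theorem wtABC_mul_eq_wtSt_mul {n : ℕ} {σ : Config n} (hσ : IsDWBC σ) {a b c q w : ℝ}
    (h34 : w * (q * w) * a ^ 2 = b ^ 2) (h56 : (1 - w) * (1 - q * w) * a ^ 2 = c ^ 2) :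
    wtABC a b c σ * (a * (1 - w)) ^ n = wtSt q w σ * (a ^ (n * n) * c ^ n) := by
  have hsq : n * n = (Ncount σ 1 + Ncount σ 2) + 2 * Ncount σ 3 + 2 * Ncount σ 6 + n := by
    rw [← sum_Ncount_eq hσ, Ncount_three_eq_four hσ, Ncount_five_eq hσ]
    ring
  rw [wtABC, wtSt, Ncount_three_eq_four hσ, Ncount_five_eq hσ, hsq, ← Ncount_three_eq_four hσ]
  calc _ = a ^ (Ncount σ 1 + Ncount σ 2) * (b ^ 2) ^ Ncount σ 3 * (c ^ 2) ^ Ncount σ 6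
        * c ^ n * (a * (1 - w)) ^ n := by ring
    _ = _ := by
      rw [← h34, ← h56]
      simp only [mul_pow]
      ring

theorem div_sum_eq_div_sum_of_mul_eq {ι K : Type*} [Fintype ι] [Field K] {f g : ι → K} {k l : K}
    (hk : k ≠ 0) (hl : l ≠ 0) (h : ∀ i, f i * k = g i * l) (i : ι) :
    f i / ∑ j, f j = g i / ∑ j, g j := by
  have hg : g = fun j => f j * (k / l) := funext fun j => by
    rw [← mul_div_assoc, h, mul_div_cancel_right₀ _ hl]
  rw [hg, ← Finset.sum_mul, mul_div_mul_right _ _ (div_ne_zero hk hl)]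

theorem Real.sinh_sq_eq_exp (x : ℝ) :
    Real.sinh x ^ 2 = (Real.exp (2 * x) - 1) ^ 2 / (4 * Real.exp (2 * x)) := by
  rw [Real.sinh_eq, Real.exp_neg, two_mul, Real.exp_add]
  field_simp
  ring

theorem stochastic_weights_mem_Ioo {t γ q w : ℝ} (hγ : 0 < γ) (ht : γ < t)
    (hq : q = Real.exp (4 * γ))
    (hw : w = (Real.exp (2 * t - 2 * γ) - 1) / (Real.exp (2 * t + 2 * γ) - 1)) :
    0 < w ∧ w < 1 ∧ 0 < q * w ∧ q * w < 1 := by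
  set X := Real.exp (2 * t - 2 * γ)
  set Y := Real.exp (2 * t + 2 * γ)
  have hX : 1 < X := Real.one_lt_exp_iff.mpr (by linarith)
  have hXY : X < Y := Real.exp_lt_exp.mpr (by linarith)
  have hq' : q = Y / X := by rw [hq, ← Real.exp_sub]; ring_nf
  have hqw : q * w = (Y * X - Y) / (Y * X - X) := by
    rw [hq', hw]
    field_simp
  rw [hqw, hw]
  refine ⟨div_pos (by linarith) (by linarith), (div_lt_one (by linarith)).mpr (by linarith),
    div_pos (by nlinarith) (by nlinarith), (div_lt_one (by nlinarith)).mpr (by linarith)⟩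

theorem stochastic_weight_products_eq {t γ a b c q w : ℝ} (htγ : t + γ ≠ 0)
    (ha : a = Real.sinh (t + γ)) (hb : b = Real.sinh (t - γ)) (hc : c = Real.sinh (2 * γ))
    (hq : q = Real.exp (4 * γ))
    (hw : w = (Real.exp (2 * t - 2 * γ) - 1) / (Real.exp (2 * t + 2 * γ) - 1)) :
    w * (q * w) * a ^ 2 = b ^ 2 ∧ (1 - w) * (1 - q * w) * a ^ 2 = c ^ 2 := by
  set X := Real.exp (2 * t - 2 * γ)
  set Y := Real.exp (2 * t + 2 * γ)
  have hX : X ≠ 0 := (Real.exp_pos _).ne'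
  have hY : Y ≠ 0 := (Real.exp_pos _).ne'
  have hY1 : Y - 1 ≠ 0 := sub_ne_zero.mpr fun h => htγ (by
    have := Real.exp_eq_one_iff _ |>.mp h
    linarith)
  have hq' : q = Y / X := by rw [hq, ← Real.exp_sub]; ring_nf
  have ha2 : a ^ 2 = (Y - 1) ^ 2 / (4 * Y) := by
    rw [ha, Real.sinh_sq_eq_exp, mul_add]
  have hb2 : b ^ 2 = (X - 1) ^ 2 / (4 * X) := by
    rw [hb, Real.sinh_sq_eq_exp, mul_sub]
  have hc2 : c ^ 2 = (q - 1) ^ 2 / (4 * q) := by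
    rw [hc, Real.sinh_sq_eq_exp, hq, ← mul_assoc]
    norm_num
  rw [ha2, hb2, hc2, hq', hw]
  constructor
  · field_simp
  · field_simp
    ring

/-- **Equality of symmetric-weight and stochastic-weight Gibbs measures:** for
`t > γ' > 0`, `a = sinh(t+γ')`, `b = sinh(t−γ')`, `c = sinh(2γ')`, `q = e^{4γ'}` and
`w = (e^{2t−2γ'}−1)/(e^{2t+2γ'}−1)` one has `0 < w < 1`, `0 < q·w < 1`, and on every
`n × n` square the DWBC Gibbs measures for the symmetric weights `(a,b,c)` and for the
stochastic weights `1, 1, w, q·w, 1−w, 1−q·w` coincide. -/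
theorem symmetric_gibbs_eq_stochastic_gibbs
    (t γ' : ℝ) (h0 : 0 < γ') (h1 : γ' < t)
    (a b c q w : ℝ)
    (ha : a = Real.sinh (t + γ')) (hb : b = Real.sinh (t - γ'))
    (hc : c = Real.sinh (2 * γ'))
    (hq : q = Real.exp (4 * γ'))
    (hw : w = (Real.exp (2 * t - 2 * γ') - 1) / (Real.exp (2 * t + 2 * γ') - 1)) :
    (0 < w ∧ w < 1 ∧ 0 < q * w ∧ q * w < 1) ∧
    ∀ n : ℕ, 1 ≤ n → ∀ σ : DWBC n, gibbs n a b c σ = gibbsSt n q w σ := by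
  have hw_mem := stochastic_weights_mem_Ioo h0 h1 hq hw
  obtain ⟨h34, h56⟩ := stochastic_weight_products_eq (by linarith) ha hb hc hq hw
  have ha0 : a ≠ 0 := ha ▸ (Real.sinh_pos_iff.mpr (by linarith)).ne'
  have hc0 : c ≠ 0 := hc ▸ (Real.sinh_pos_iff.mpr (by linarith)).ne'
  refine ⟨hw_mem, fun n _ σ => ?_⟩
  exact div_sum_eq_div_sum_of_mul_eq
    (pow_ne_zero _ (mul_ne_zero ha0 (sub_ne_zero.mpr hw_mem.2.1.ne')))
    (mul_ne_zero (pow_ne_zero _ ha0) (pow_ne_zero _ hc0))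
    (fun τ : DWBC n => wtABC_mul_eq_wtSt_mul τ.2 h34 h56) σ

end SixV
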